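/- arXiv:1707.08725 — 6 statements merged into one kernel-verified Lean document; each statement's English description precedes it below -/
import Mathlib

section
/- A comparator network C on n channels is a sorting network (i.e., C(x) is monotonically nondecreasing for every binary input x ∈ {0,1}^n) if and only if its output set outputs(C) has exactly n+1 elements. -/
/-- Apply a single comparator `c = (i, j)`: the minimum of the two values goes to
channel `i` and the maximum to channel `j`. -/
def applyComp {α : Type*} [LinearOrder α] {n : ℕ} (c : Fin n × Fin n) (x : Fin n → α) :
    Fin n → α :=
  fun k => if k = c.1 then min (x c.1) (x c.2)
           else if k = c.2 then max (x c.1) (x c.2)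
           else x k

/-- Run a comparator network (a list of comparators) on an input sequence. -/
def run {α : Type*} [LinearOrder α] {n : ℕ} (C : List (Fin n × Fin n)) (x : Fin n → α) :
    Fin n → α :=
  C.foldl (fun y c => applyComp c y) x

/-- A standard comparator network: every comparator `(i, j)` has `i < j`. -/
def Standard {n : ℕ} (C : List (Fin n × Fin n)) : Prop := ∀ c ∈ C, c.1 < c.2

/-- The output set of a comparator network on binary sequences. -/
def outputs {n : ℕ} (C : List (Fin n × Fin n)) : Finset (Fin n → Bool) :=
  Finset.image (run C) Finset.univ

/-- The cluster of outputs having exactly `p` ones. -/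
def cluster {n : ℕ} (C : List (Fin n × Fin n)) (p : ℕ) : Finset (Fin n → Bool) :=
  (outputs C).filter (fun x => (Finset.univ.filter (fun i => x i = true)).card = p)

/-- Positions at which some sequence of `cluster C p` has a zero. -/
def zeros {n : ℕ} (C : List (Fin n × Fin n)) (p : ℕ) : Finset (Fin n) :=
  Finset.univ.filter (fun i => ∃ x ∈ cluster C p, x i = false)

/-- Positions at which some sequence of `cluster C p` has a one. -/
def ones {n : ℕ} (C : List (Fin n × Fin n)) (p : ℕ) : Finset (Fin n) :=
  Finset.univ.filter (fun i => ∃ x ∈ cluster C p, x i = true)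

/-- The action of a permutation on a sequence: `π(x) = (x_{π(1)}, …, x_{π(n)})`. -/
def permSeq {n : ℕ} {α : Type*} (π : Equiv.Perm (Fin n)) (x : Fin n → α) : Fin n → α :=
  fun k => x (π k)

/-- `Ca` subsumes `Cb` if some permutation maps `outputs Ca` into `outputs Cb`. -/
def Subsumes {n : ℕ} (Ca Cb : List (Fin n × Fin n)) : Prop :=
  ∃ π : Equiv.Perm (Fin n), (outputs Ca).image (permSeq π) ⊆ outputs Cb

/-- The edge relation of the subsumption graph `G(Ca, Cb)`. -/
def Edge {n : ℕ} (Ca Cb : List (Fin n × Fin n)) (i j : Fin n) : Prop :=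
  (∀ p ≤ n, i ∈ zeros Ca p → j ∈ zeros Cb p) ∧
  (∀ p ≤ n, i ∈ ones Ca p → j ∈ ones Cb p)

/-- Number of ones in a binary sequence. -/
def cnt {n : ℕ} (x : Fin n → Bool) : ℕ := (Finset.univ.filter (fun i => x i = true)).card

lemma cnt_le {n : ℕ} (x : Fin n → Bool) : cnt x ≤ n := by
  simpa [cnt] using Finset.card_filter_le Finset.univ (fun i => x i = true)

lemma mono_true_iff {n : ℕ} {x : Fin n → Bool} (hx : Monotone x) (i : Fin n) :
    x i = true ↔ n ≤ i.val + cnt x := by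
  constructor
  · intro hi
    have hsub : Finset.Ici i ⊆ Finset.univ.filter (fun j => x j = true) := by
      intro j hj
      simp only [Finset.mem_Ici] at hj
      simp only [Finset.mem_filter, Finset.mem_univ, true_and]
      have hle := hx hj
      rw [hi] at hle
      cases hxj : x j
      · rw [hxj] at hle; exact absurd hle (by decide)
      · rfl
    have hcard := Finset.card_le_card hsub
    rw [Fin.card_Ici] at hcard
    have hlt := i.isLt
    have : cnt x = (Finset.univ.filter (fun j => x j = true)).card := rfl
    omega
  · intro hni
    by_contra hfalse
    have hxi : x i = false := by
      cases h : x i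
      · rfl
      · exact absurd h hfalse
    have hsub : Finset.univ.filter (fun j => x j = true) ⊆ Finset.Ioi i := by
      intro j hj
      simp only [Finset.mem_filter, Finset.mem_univ, true_and] at hj
      simp only [Finset.mem_Ioi]
      by_contra hji
      push_neg at hji
      have hle := hx hji
      rw [hj, hxi] at hle
      exact absurd hle (by decide)
    have hcard := Finset.card_le_card hsub
    rw [Fin.card_Ioi] at hcard
    have hlt := i.isLt
    have : cnt x = (Finset.univ.filter (fun j => x j = true)).card := rfl
    omega

lemma mono_eq_sorted {n : ℕ} {x : Fin n → Bool} (hx : Monotone x) :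
    x = fun i => decide (n ≤ i.val + cnt x) := by
  funext i
  by_cases h : n ≤ i.val + cnt x
  · rw [(mono_true_iff hx i).2 h, decide_eq_true h]
  · have hne : x i = false := by
      cases h' : x i
      · rfl
      · exact absurd ((mono_true_iff hx i).1 h') h
    rw [hne, decide_eq_false h]

lemma sortedSeq_mono {n p : ℕ} : Monotone (fun i : Fin n => decide (n ≤ i.val + p)) := by
  intro i j hij
  simp only
  by_cases h : n ≤ i.val + p
  · have hj : n ≤ j.val + p := by
      have : i.val ≤ j.val := hij
      omega
    simp [h, hj]
  · simp [h]

lemma run_cons {n : ℕ} (c : Fin n × Fin n) (C : List (Fin n × Fin n)) (x : Fin n → Bool) :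
    run (c :: C) x = run C (applyComp c x) := rfl

lemma applyComp_of_monotone {n : ℕ} {c : Fin n × Fin n} (hc : c.1 < c.2)
    {x : Fin n → Bool} (hx : Monotone x) : applyComp c x = x := by
  funext k
  simp only [applyComp]
  split_ifs with h1 h2
  · subst h1; exact min_eq_left (hx hc.le)
  · subst h2; exact max_eq_right (hx hc.le)
  · rfl

lemma run_of_monotone {n : ℕ} {C : List (Fin n × Fin n)} (hC : Standard C)
    {x : Fin n → Bool} (hx : Monotone x) : run C x = x := by
  induction C with
  | nil => rfl
  | cons c C ih =>
    rw [run_cons, applyComp_of_monotone (hC c List.mem_cons_self) hx]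
    exact ih (fun d hd => hC d (List.mem_cons_of_mem c hd))

/-- `C` is a sorting network iff its output set has exactly `n + 1` elements. -/
theorem sorting_iff_outputs_card_eq_succ {n : ℕ} (C : List (Fin n × Fin n))
    (hC : Standard C) :
    (∀ x : Fin n → Bool, Monotone (run C x)) ↔ (outputs C).card = n + 1 := by
  set S : Finset (Fin n → Bool) :=
    (Finset.range (n + 1)).image (fun p => (fun i : Fin n => decide (n ≤ i.val + p))) with hS
  have hSsub : S ⊆ outputs C := by
    intro y hy
    rw [hS] at hy
    simp only [Finset.mem_image, Finset.mem_range] at hy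
    obtain ⟨p, _, rfl⟩ := hy
    simp only [outputs, Finset.mem_image, Finset.mem_univ, true_and]
    exact ⟨_, run_of_monotone hC sortedSeq_mono⟩
  have hScard : S.card = n + 1 := by
    rw [hS, Finset.card_image_of_injOn, Finset.card_range]
    intro p hp q hq hpq
    simp only [Finset.mem_coe, Finset.mem_range] at hp hq
    by_contra hne
    have hm : 0 < max p q := by omega
    have hmn : max p q ≤ n := by omega
    have := congrFun hpq ⟨n - max p q, by omega⟩
    simp only [decide_eq_decide] at this
    omega
  constructor
  · intro hmono
    have hsub : outputs C ⊆ S := by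
      intro y hy
      simp only [outputs, Finset.mem_image, Finset.mem_univ, true_and] at hy
      obtain ⟨x, rfl⟩ := hy
      rw [hS]
      simp only [Finset.mem_image, Finset.mem_range]
      exact ⟨cnt (run C x), Nat.lt_succ_of_le (cnt_le _),
        (mono_eq_sorted (hmono x)).symm⟩
    rw [Finset.Subset.antisymm hsub hSsub, hScard]
  · intro hcard x
    have heq : S = outputs C :=
      Finset.eq_of_subset_of_card_le hSsub (by rw [hcard, hScard])
    have hmem : run C x ∈ S := by
      rw [heq]
      simp only [outputs, Finset.mem_image, Finset.mem_univ, true_and]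
      exact ⟨x, rfl⟩
    rw [hS] at hmem
    simp only [Finset.mem_image, Finset.mem_range] at hmem
    obtain ⟨p, _, hp⟩ := hmem
    rw [← hp]
    exact sortedSeq_mono
end

section
/- Let C_a and C_b be comparator networks on n channels, both of the same size (number of comparators), with C_a ⪯ C_b. If there exists a comparator network C such that the concatenation C_b;C is a sorting network of size k, then there exists a comparator network C' such that the concatenation C_a;C' is a sorting network of size k. -/
-- ==================== auxiliary development ====================

namespace SubAux

variable {n : ℕ}

lemma run_nil {α : Type*} [LinearOrder α] (x : Fin n → α) : run ([] : List (Fin n × Fin n)) x = x := rfl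

lemma run_cons {α : Type*} [LinearOrder α] (c : Fin n × Fin n) (G : List (Fin n × Fin n))
    (x : Fin n → α) : run (c :: G) x = run G (applyComp c x) := rfl

lemma run_append {α : Type*} [LinearOrder α] (A B : List (Fin n × Fin n)) (x : Fin n → α) :
    run (A ++ B) x = run B (run A x) := by
  simp [run, List.foldl_append]

lemma permSeq_permSeq {α : Type*} (π ρ : Equiv.Perm (Fin n)) (x : Fin n → α) :
    permSeq π (permSeq ρ x) = permSeq (π.trans ρ) x := rfl

lemma permSeq_inj {α : Type*} (π : Equiv.Perm (Fin n)) {x y : Fin n → α}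
    (h : permSeq π x = permSeq π y) : x = y := by
  funext k
  have := congrFun h (π.symm k)
  simpa [permSeq] using this

def mapPerm (π : Equiv.Perm (Fin n)) (C : List (Fin n × Fin n)) : List (Fin n × Fin n) :=
  C.map (fun c => (π c.1, π c.2))

@[simp] lemma mapPerm_length (π : Equiv.Perm (Fin n)) (C : List (Fin n × Fin n)) :
    (mapPerm π C).length = C.length := by simp [mapPerm]

lemma applyComp_permSeq {α : Type*} [LinearOrder α] (π : Equiv.Perm (Fin n))
    (c : Fin n × Fin n) (z : Fin n → α) :
    applyComp c (permSeq π z) = permSeq π (applyComp (π c.1, π c.2) z) := by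
  funext k
  simp [applyComp, permSeq, Equiv.apply_eq_iff_eq]

lemma run_permSeq {α : Type*} [LinearOrder α] (π : Equiv.Perm (Fin n))
    (C : List (Fin n × Fin n)) (z : Fin n → α) :
    run C (permSeq π z) = permSeq π (run (mapPerm π C) z) := by
  induction C generalizing z with
  | nil => rfl
  | cons c G ih =>
      rw [run_cons, applyComp_permSeq, ih]
      rfl

lemma applyComp_eq_self {α : Type*} [LinearOrder α] {c : Fin n × Fin n} {x : Fin n → α}
    (hle : x c.1 ≤ x c.2) : applyComp c x = x := by
  funext k
  unfold applyComp
  by_cases h1 : k = c.1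
  · rw [if_pos h1, h1, min_eq_left hle]
  by_cases h2 : k = c.2
  · rw [if_neg h1, if_pos h2, h2, max_eq_right hle]
  · rw [if_neg h1, if_neg h2]

lemma applyComp_swap {α : Type*} [LinearOrder α] (c : Fin n × Fin n) (x : Fin n → α)
    (h12 : c.1 ≠ c.2) :
    applyComp c x = permSeq (Equiv.swap c.1 c.2) (applyComp (c.2, c.1) x) := by
  funext k
  simp only [applyComp, permSeq]
  by_cases h1 : k = c.1
  · have hs : Equiv.swap c.1 c.2 k = c.2 := by rw [h1, Equiv.swap_apply_left]
    rw [if_pos h1, hs, if_pos rfl]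
    exact min_comm _ _
  by_cases h2 : k = c.2
  · have hs : Equiv.swap c.1 c.2 k = c.1 := by rw [h2, Equiv.swap_apply_right]
    rw [if_neg h1, if_pos h2, hs, if_neg h12, if_pos rfl]
    exact max_comm _ _
  · have hs : Equiv.swap c.1 c.2 k = k := Equiv.swap_apply_of_ne_of_ne h1 h2
    rw [if_neg h1, if_neg h2, hs, if_neg h2, if_neg h1]

/-- standardization of a generalized network -/
def std : List (Fin n × Fin n) → List (Fin n × Fin n)
  | [] => []
  | c :: G =>
      if c.2 < c.1 then (c.2, c.1) :: std (mapPerm (Equiv.swap c.1 c.2) G)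
      else c :: std G
termination_by l => l.length
decreasing_by all_goals simp

@[simp] lemma std_nil : std ([] : List (Fin n × Fin n)) = [] := by simp [std]

lemma std_cons (c : Fin n × Fin n) (G : List (Fin n × Fin n)) :
    std (c :: G) = if c.2 < c.1 then (c.2, c.1) :: std (mapPerm (Equiv.swap c.1 c.2) G)
      else c :: std G := by
  rw [std]

lemma std_length (G : List (Fin n × Fin n)) : (std G).length = G.length := by
  suffices h : ∀ m (G : List (Fin n × Fin n)), G.length = m → (std G).length = G.length from
    h G.length G rfl
  clear G
  intro m
  induction m with
  | zero =>
      intro G hl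
      cases G with
      | nil => simp
      | cons c G => simp at hl
  | succ m ih =>
      intro G hl
      cases G with
      | nil => simp at hl
      | cons c G =>
          simp only [List.length_cons, Nat.succ.injEq] at hl
          rw [std_cons]
          split
          · simp [ih (mapPerm (Equiv.swap c.1 c.2) G) (by simp [hl]), hl]
          · simp [ih G hl, hl]

lemma std_standard (G : List (Fin n × Fin n)) (hG : ∀ d ∈ G, d.1 ≠ d.2) :
    Standard (std G) := by
  suffices h : ∀ m (G : List (Fin n × Fin n)), (∀ d ∈ G, d.1 ≠ d.2) → G.length = m →
      Standard (std G) from h G.length G hG rfl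
  clear hG G
  intro m
  induction m with
  | zero =>
      intro G hG hl
      cases G with
      | nil => intro c hc; simp at hc
      | cons c G => simp at hl
  | succ m ih =>
      intro G hG hl
      cases G with
      | nil => simp at hl
      | cons c G =>
          simp only [List.length_cons, Nat.succ.injEq] at hl
          rw [std_cons]
          split
          · rename_i h
            intro d hd
            rcases List.mem_cons.mp hd with h' | h'
            · subst h'; exact h
            · exact ih (mapPerm (Equiv.swap c.1 c.2) G)
                (by
                  intro e he
                  simp only [mapPerm, List.mem_map] at he
                  obtain ⟨e', he', rfl⟩ := he
                  exact fun hc => (hG e' (List.mem_cons_of_mem _ he'))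
                    ((Equiv.swap c.1 c.2).injective hc))
                (by simp [hl]) d h'

          · rename_i h
            intro d hd
            rcases List.mem_cons.mp hd with h' | h'
            · subst h'
              exact lt_of_le_of_ne (not_lt.mp h) (hG d (List.mem_cons_self))
            · exact ih G (fun e he => hG e (List.mem_cons_of_mem _ he)) hl d h'

lemma std_append_standard (P G : List (Fin n × Fin n)) (hP : Standard P) :
    std (P ++ G) = P ++ std G := by
  induction P with
  | nil => simp
  | cons c P ih =>
      have hc : ¬ c.2 < c.1 := asymm (hP c (List.mem_cons_self))
      rw [List.cons_append, std_cons, if_neg hc,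
        ih (fun d hd => hP d (List.mem_cons_of_mem _ hd))]
      rfl

/-- untangling: a generalized network is, up to a fixed output permutation,
    equivalent to its standardization. -/
lemma untangle (G : List (Fin n × Fin n)) :
    ∃ ρ : Equiv.Perm (Fin n), ∀ x : Fin n → Bool, run G x = permSeq ρ (run (std G) x) := by
  suffices h : ∀ m (G : List (Fin n × Fin n)), G.length = m →
      ∃ ρ : Equiv.Perm (Fin n), ∀ x : Fin n → Bool, run G x = permSeq ρ (run (std G) x) from
    h G.length G rfl
  clear G
  intro m
  induction m with
  | zero =>
      intro G hl
      cases G with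
      | nil =>
          refine ⟨1, fun x => ?_⟩
          rw [std_nil]
          funext k
          simp [permSeq]
      | cons c G => simp at hl
  | succ m ih =>
      intro G hl
      cases G with
      | nil => simp at hl
      | cons c G =>
          simp only [List.length_cons, Nat.succ.injEq] at hl
          by_cases h : c.2 < c.1
          · set τ := Equiv.swap c.1 c.2 with hτ
            obtain ⟨ρ₀, hρ₀⟩ := ih (mapPerm τ G) (by simp [hl])
            refine ⟨τ.trans ρ₀, fun x => ?_⟩
            rw [run_cons, applyComp_swap c x (ne_of_gt h), run_permSeq, hρ₀, permSeq_permSeq,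
              std_cons, if_pos h, run_cons]
          · obtain ⟨ρ, hρ⟩ := ih G hl
            refine ⟨ρ, fun x => ?_⟩
            rw [run_cons, hρ, std_cons, if_neg h, run_cons]

/-- number of ones -/
def countOnes (x : Fin n → Bool) : ℕ := (Finset.univ.filter (fun i => x i = true)).card

lemma countOnes_permSeq (π : Equiv.Perm (Fin n)) (x : Fin n → Bool) :
    countOnes (permSeq π x) = countOnes x := by
  unfold countOnes
  have : (Finset.univ.filter (fun i => permSeq π x i = true)) =
      (Finset.univ.filter (fun i => x i = true)).map π.symm.toEmbedding := by
    ext i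
    simp only [Finset.mem_filter, Finset.mem_univ, true_and, Finset.mem_map,
      Equiv.coe_toEmbedding, permSeq]
    constructor
    · intro h; exact ⟨π i, (Finset.mem_filter.mp h).2, by simp⟩
    · rintro ⟨j, hj, rfl⟩; exact Finset.mem_filter.mpr ⟨Finset.mem_univ _, by simpa using hj⟩
  rw [this, Finset.card_map]

lemma applyComp_eq_permSeq (c : Fin n × Fin n) (x : Fin n → Bool) :
    ∃ τ : Equiv.Perm (Fin n), applyComp c x = permSeq τ x := by
  by_cases h : x c.1 = true ∧ x c.2 = false
  · refine ⟨Equiv.swap c.1 c.2, ?_⟩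
    have h12 : c.1 ≠ c.2 := by
      intro he
      rw [he, h.2] at h
      exact absurd h.1 (by simp [h.2, he])
    funext k
    simp only [applyComp, permSeq]
    by_cases h1 : k = c.1
    · have hs : Equiv.swap c.1 c.2 k = c.2 := by rw [h1, Equiv.swap_apply_left]
      rw [if_pos h1, hs, h.1, h.2]
      rfl
    by_cases h2 : k = c.2
    · have hs : Equiv.swap c.1 c.2 k = c.1 := by rw [h2, Equiv.swap_apply_right]
      rw [if_neg h1, if_pos h2, hs, h.1, h.2]
      rfl
    · have hs : Equiv.swap c.1 c.2 k = k := Equiv.swap_apply_of_ne_of_ne h1 h2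
      rw [if_neg h1, if_neg h2, hs]
  · refine ⟨1, ?_⟩
    have hle : x c.1 ≤ x c.2 := by
      cases hb1 : x c.1 <;> cases hb2 : x c.2 <;> simp_all
    rw [applyComp_eq_self hle]
    rfl

lemma countOnes_applyComp (c : Fin n × Fin n) (x : Fin n → Bool) :
    countOnes (applyComp c x) = countOnes x := by
  obtain ⟨τ, hτ⟩ := applyComp_eq_permSeq c x
  rw [hτ, countOnes_permSeq]

lemma countOnes_run (G : List (Fin n × Fin n)) (x : Fin n → Bool) :
    countOnes (run G x) = countOnes x := by
  induction G generalizing x with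
  | nil => rfl
  | cons c G ih => rw [run_cons, ih, countOnes_applyComp]

lemma run_monotone_fixed (S : List (Fin n × Fin n)) (hS : Standard S)
    (m : Fin n → Bool) (hm : Monotone m) : run S m = m := by
  induction S with
  | nil => rfl
  | cons c S ih =>
      have hc : c.1 < c.2 := hS c (List.mem_cons_self)
      rw [run_cons, applyComp_eq_self (hm hc.le),
        ih (fun d hd => hS d (List.mem_cons_of_mem _ hd))]

lemma monotone_char (f : Fin n → Bool) (hf : Monotone f) (i : Fin n) :
    f i = true ↔ n - countOnes f ≤ (i : ℕ) := by
  have hpn : countOnes f ≤ n := by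
    unfold countOnes
    calc (Finset.univ.filter (fun j => f j = true)).card ≤ Finset.univ.card :=
          Finset.card_filter_le _ _
      _ = n := Finset.card_fin n
  have hi : (i : ℕ) < n := i.isLt
  constructor
  · intro h
    have hsub : Finset.Ici i ⊆ Finset.univ.filter (fun j => f j = true) := by
      intro j hj
      simp only [Finset.mem_Ici] at hj
      have hle := hf hj
      rw [h] at hle
      have : f j = true := by
        cases hj' : f j
        · rw [hj'] at hle; exact absurd hle (by decide)
        · rfl
      simp [this]
    have hcard := Finset.card_le_card hsub
    rw [Fin.card_Ici] at hcard
    unfold countOnes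
    omega
  · intro h
    by_contra hfi
    have hfi' : f i = false := by
      cases hfi2 : f i
      · rfl
      · exact absurd hfi2 hfi
    have hsub : Finset.univ.filter (fun j => f j = true) ⊆ Finset.Ioi i := by
      intro j hj
      simp only [Finset.mem_filter, Finset.mem_univ, true_and] at hj
      simp only [Finset.mem_Ioi]
      by_contra hji
      have hle : j ≤ i := not_lt.mp hji
      have := hf hle
      rw [hj, hfi'] at this
      exact absurd this (by decide)
    have hcard := Finset.card_le_card hsub
    rw [Fin.card_Ioi] at hcard
    unfold countOnes at h
    omega

lemma monotone_unique (f g : Fin n → Bool) (hf : Monotone f) (hg : Monotone g)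
    (h : countOnes f = countOnes g) : f = g := by
  funext i
  have h1 := monotone_char f hf i
  have h2 := monotone_char g hg i
  rw [h] at h1
  cases hfi : f i <;> cases hgi : g i
  · rfl
  · exact absurd (h1.mpr (h2.mp hgi)) (by simp [hfi])
  · exact absurd (h2.mpr (h1.mp hfi)) (by simp [hgi])
  · rfl

lemma sorts_of_perm_sorts (S : List (Fin n × Fin n)) (hS : Standard S)
    (σ : Equiv.Perm (Fin n)) (h : ∀ x : Fin n → Bool, Monotone (permSeq σ (run S x)))
    (x : Fin n → Bool) : Monotone (run S x) := by
  set w := run S x with hw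
  set m := permSeq σ w with hm
  have hmono : Monotone m := h x
  have hfix : run S m = m := run_monotone_fixed S hS m hmono
  have hm2 : Monotone (permSeq σ m) := by
    have := h m
    rwa [hfix] at this
  have hcount : countOnes (permSeq σ m) = countOnes m := countOnes_permSeq σ m
  have heq : permSeq σ m = m := monotone_unique _ _ hm2 hmono hcount
  have : permSeq σ m = permSeq σ w := by rw [heq, hm]
  have hwm : m = w := permSeq_inj σ this
  rwa [← hwm]



lemma standard_append {P Q : List (Fin n × Fin n)} (hP : Standard P) (hQ : Standard Q) :
    Standard (P ++ Q) := by
  intro c hc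
  rcases List.mem_append.mp hc with h | h
  · exact hP c h
  · exact hQ c h

end SubAux

open SubAux in
theorem subsumes_extends_to_sorting' {n : ℕ} (Ca Cb : List (Fin n × Fin n))
    (hCa : Standard Ca) (hCb : Standard Cb)
    (hsize : Ca.length = Cb.length) (hsub : Subsumes Ca Cb)
    (k : ℕ) (C : List (Fin n × Fin n)) (hC : Standard C)
    (hk : (Cb ++ C).length = k)
    (hsort : ∀ x : Fin n → Bool, Monotone (run (Cb ++ C) x)) :
    ∃ C' : List (Fin n × Fin n), Standard C' ∧ (Ca ++ C').length = k ∧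
      ∀ x : Fin n → Bool, Monotone (run (Ca ++ C') x) := by
  obtain ⟨π, hπ⟩ := hsub
  set D := mapPerm π C with hD
  have hDdist : ∀ d ∈ D, d.1 ≠ d.2 := by
    intro d hd
    simp only [hD, mapPerm, List.mem_map] at hd
    obtain ⟨c, hc, rfl⟩ := hd
    exact fun h => absurd (π.injective h) (ne_of_lt (hC c hc))
  set G := Ca ++ D with hG
  have hGdist : ∀ d ∈ G, d.1 ≠ d.2 := by
    intro d hd
    rcases List.mem_append.mp hd with h | h
    · exact ne_of_lt (hCa d h)
    · exact hDdist d h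
  have hGsort : ∀ x : Fin n → Bool, Monotone (permSeq π (run G x)) := by
    intro x
    have hz : run Ca x ∈ outputs Ca := Finset.mem_image_of_mem _ (Finset.mem_univ x)
    have hmem : permSeq π (run Ca x) ∈ outputs Cb := hπ (Finset.mem_image_of_mem _ hz)
    obtain ⟨y, _, hy⟩ := Finset.mem_image.mp hmem
    have h2 : permSeq π (run G x) = run C (permSeq π (run Ca x)) := by
      rw [hG, run_append, run_permSeq π C (run Ca x)]
    rw [h2, ← hy, ← run_append]
    exact hsort y
  obtain ⟨ρ, hρ⟩ := untangle G
  have hstdG : std G = Ca ++ std D := std_append_standard Ca D hCa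
  refine ⟨std D, std_standard D hDdist, ?_, ?_⟩
  · have := std_length D
    simp only [List.length_append] at hk ⊢
    simp only [this, hD, mapPerm_length]
    have h2 := std_length (mapPerm π C)
    simp only [mapPerm_length] at h2
    omega
  · have hS : Standard (Ca ++ std D) := standard_append hCa (std_standard D hDdist)
    refine fun x => sorts_of_perm_sorts (Ca ++ std D) hS (π.trans ρ) ?_ x
    intro z
    have : permSeq (π.trans ρ) (run (Ca ++ std D) z) = permSeq π (run G z) := by
      rw [← hstdG, ← permSeq_permSeq, ← hρ]
    rw [this]
    exact hGsort z

/-- if `Ca ⪯ Cb` (both of the same size) and `Cb ; C` is a sorting network of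
size `k`, then there is a network `C'` such that `Ca ; C'` is a sorting network of size `k`. -/
theorem subsumes_extends_to_sorting {n : ℕ} (Ca Cb : List (Fin n × Fin n))
    (hCa : Standard Ca) (hCb : Standard Cb)
    (hsize : Ca.length = Cb.length) (hsub : Subsumes Ca Cb)
    (k : ℕ) (C : List (Fin n × Fin n)) (hC : Standard C)
    (hk : (Cb ++ C).length = k)
    (hsort : ∀ x : Fin n → Bool, Monotone (run (Cb ++ C) x)) :
    ∃ C' : List (Fin n × Fin n), Standard C' ∧ (Ca ++ C').length = k ∧
      ∀ x : Fin n → Bool, Monotone (run (Ca ++ C') x) := by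
  exact subsumes_extends_to_sorting' Ca Cb hCa hCb hsize hsub k C hC hk hsort
end

section
/- Let C_a and C_b be comparator networks on n channels. If there exists p with 0 ≤ p ≤ n such that |cluster(C_a,p)| > |cluster(C_b,p)|, then C_a does not subsume C_b. -/
/-- if some cluster of `Ca` is strictly bigger than the corresponding cluster
of `Cb`, then `Ca` does not subsume `Cb`. -/
theorem not_subsumes_of_cluster_card_gt {n : ℕ} (Ca Cb : List (Fin n × Fin n))
    (hCa : Standard Ca) (hCb : Standard Cb)
    (h : ∃ p ≤ n, (cluster Ca p).card > (cluster Cb p).card) :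
    ¬ Subsumes Ca Cb := by
  rintro ⟨π, hπ⟩
  obtain ⟨p, hp, hcard⟩ := h
  have hinj : Function.Injective (permSeq (α := Bool) π) := by
    intro x y hxy
    funext k
    have := congrFun hxy (π.symm k)
    simpa [permSeq] using this
  have hsub : (cluster Ca p).image (permSeq π) ⊆ cluster Cb p := by
    intro y hy
    obtain ⟨x, hx, rfl⟩ := Finset.mem_image.mp hy
    obtain ⟨hxo, hxc⟩ := Finset.mem_filter.mp hx
    refine Finset.mem_filter.mpr ⟨hπ (Finset.mem_image_of_mem _ hxo), ?_⟩
    rw [← hxc]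
    apply Finset.card_bij (fun i _ => π i)
    · intro i hi
      simp only [Finset.mem_filter, Finset.mem_univ, true_and] at hi ⊢
      simpa [permSeq] using hi
    · intro i _ j _ hij
      exact π.injective hij
    · intro j hj
      refine ⟨π.symm j, ?_, by simp⟩
      simp only [Finset.mem_filter, Finset.mem_univ, true_and] at hj ⊢
      simpa [permSeq] using hj
  have := Finset.card_le_card hsub
  rw [Finset.card_image_of_injective _ hinj] at this
  omega
end

section
/- Let C_a and C_b be comparator networks on n channels. If there exists p with 0 ≤ p ≤ n such that |zeros(C_a,p)| > |zeros(C_b,p)| or |ones(C_a,p)| > |ones(C_b,p)|, then C_a does not subsume C_b. -/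
lemma card_ones_perm {n : ℕ} (π : Equiv.Perm (Fin n)) (x : Fin n → Bool) :
    (Finset.univ.filter (fun i => permSeq π x i = true)).card =
    (Finset.univ.filter (fun i => x i = true)).card := by
  apply Finset.card_bij (fun i _ => π i)
  · intro i hi
    simp only [Finset.mem_filter, Finset.mem_univ, true_and] at hi ⊢
    exact hi
  · intro a _ b _ hab
    exact π.injective hab
  · intro b hb
    simp only [Finset.mem_filter, Finset.mem_univ, true_and, permSeq] at hb ⊢
    exact ⟨π.symm b, Finset.mem_filter.mpr ⟨Finset.mem_univ _, by simp [permSeq, hb]⟩, by simp⟩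

/-- if for some `0 ≤ p ≤ n` we have `|zeros(Ca, p)| > |zeros(Cb, p)|` or
`|ones(Ca, p)| > |ones(Cb, p)|`, then `Ca` does not subsume `Cb`. -/
theorem not_subsumes_of_zeros_or_ones_card_gt {n : ℕ} (Ca Cb : List (Fin n × Fin n))
    (hCa : Standard Ca) (hCb : Standard Cb)
    (h : ∃ p ≤ n, (zeros Ca p).card > (zeros Cb p).card ∨
      (ones Ca p).card > (ones Cb p).card) :
    ¬ Subsumes Ca Cb := by
  intro hsub
  obtain ⟨π, hπ⟩ := hsub
  obtain ⟨p, hp, hcase⟩ := h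
  have key : ∀ x ∈ cluster Ca p, permSeq π x ∈ cluster Cb p := by
    intro x hx
    simp only [cluster, Finset.mem_filter] at hx ⊢
    exact ⟨hπ (Finset.mem_image_of_mem _ hx.1), by rw [card_ones_perm]; exact hx.2⟩
  have hz : (zeros Ca p).card ≤ (zeros Cb p).card := by
    apply Finset.card_le_card_of_injOn (fun i => π.symm i)
    · intro i hi
      simp only [zeros, Finset.mem_coe, Finset.mem_filter, Finset.mem_univ, true_and] at hi ⊢
      obtain ⟨x, hx, hxi⟩ := hi
      exact ⟨permSeq π x, key x hx, by simp [permSeq, hxi]⟩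
    · intro a _ b _ hab
      exact π.symm.injective hab
  have ho : (ones Ca p).card ≤ (ones Cb p).card := by
    apply Finset.card_le_card_of_injOn (fun i => π.symm i)
    · intro i hi
      simp only [ones, Finset.mem_coe, Finset.mem_filter, Finset.mem_univ, true_and] at hi ⊢
      obtain ⟨x, hx, hxi⟩ := hi
      exact ⟨permSeq π x, key x hx, by simp [permSeq, hxi]⟩
    · intro a _ b _ hab
      exact π.symm.injective hab
  rcases hcase with h1 | h1 <;> omega
end

section
/- Let C_a and C_b be comparator networks on n channels and let π be a permutation of {1,…,n} with π(outputs(C_a)) ⊆ outputs(C_b). For every p with 0 ≤ p ≤ n such that |cluster(C_a,p)| = |cluster(C_b,p)|, if position i maps under π to position j, then j ∈ zeros(C_b,p) implies i ∈ zeros(C_a,p) and j ∈ ones(C_b,p) implies i ∈ ones(C_a,p). -/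
/-- if `π(outputs Ca) ⊆ outputs Cb` and `|cluster(Ca, p)| = |cluster(Cb, p)|`
for some `0 ≤ p ≤ n`, then whenever position `i` maps under `π` to position `j`
(i.e. `π j = i`), `j ∈ zeros(Cb, p)` implies `i ∈ zeros(Ca, p)` and `j ∈ ones(Cb, p)`
implies `i ∈ ones(Ca, p)`. -/
theorem reverse_zeros_ones_of_cluster_card_eq {n : ℕ} (Ca Cb : List (Fin n × Fin n))
    (hCa : Standard Ca) (hCb : Standard Cb) (π : Equiv.Perm (Fin n))
    (hπ : (outputs Ca).image (permSeq π) ⊆ outputs Cb) :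
    ∀ p ≤ n, (cluster Ca p).card = (cluster Cb p).card →
      ∀ i j : Fin n, π j = i →
        (j ∈ zeros Cb p → i ∈ zeros Ca p) ∧ (j ∈ ones Cb p → i ∈ ones Ca p) := by
  intro p hp hcard i j hji
  have hinj : Function.Injective (permSeq (n := n) (α := Bool) π) := by
    intro x y hxy
    funext k
    have := congrFun hxy (π.symm k)
    simpa [permSeq] using this
  have hsub : (cluster Ca p).image (permSeq π) ⊆ cluster Cb p := by
    intro y hy
    simp only [Finset.mem_image] at hy
    obtain ⟨x, hx, rfl⟩ := hy
    simp only [cluster, Finset.mem_filter] at hx ⊢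
    constructor
    · exact hπ (Finset.mem_image_of_mem _ hx.1)
    · rw [← hx.2]
      apply Finset.card_bij (fun k _ => π k)
      · intro k hk
        simp only [Finset.mem_filter, Finset.mem_univ, true_and] at hk ⊢
        exact hk
      · intro a _ b _ hab; exact π.injective hab
      · intro b hb
        refine ⟨π.symm b, ?_, by simp⟩
        simp only [Finset.mem_filter, Finset.mem_univ, true_and] at hb ⊢
        simpa [permSeq] using hb
  have heq : (cluster Ca p).image (permSeq π) = cluster Cb p := by
    apply Finset.eq_of_subset_of_card_le hsub
    rw [Finset.card_image_of_injective _ hinj, hcard]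
  constructor
  · intro hj
    simp only [zeros, Finset.mem_filter, Finset.mem_univ, true_and] at hj ⊢
    obtain ⟨y, hy, hyj⟩ := hj
    rw [← heq] at hy
    simp only [Finset.mem_image] at hy
    obtain ⟨x, hx, rfl⟩ := hy
    exact ⟨x, hx, by simpa [permSeq, hji] using hyj⟩
  · intro hj
    simp only [ones, Finset.mem_filter, Finset.mem_univ, true_and] at hj ⊢
    obtain ⟨y, hy, hyj⟩ := hj
    rw [← heq] at hy
    simp only [Finset.mem_image] at hy
    obtain ⟨x, hx, rfl⟩ := hy
    exact ⟨x, hx, by simpa [permSeq, hji] using hyj⟩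
end

section
/- Zero-one principle: Let C be a comparator network on n channels. If C(x) is sorted in nondecreasing order for every binary input x ∈ {0,1}^n, then for every linearly ordered set α and every input y ∈ α^n, the output C(y) is sorted in nondecreasing order. -/
lemma applyComp_map {α β : Type*} [LinearOrder α] [LinearOrder β] {n : ℕ}
    (f : α → β) (hf : Monotone f) (c : Fin n × Fin n) (x : Fin n → α) :
    applyComp c (f ∘ x) = f ∘ applyComp c x := by
  funext k
  simp only [applyComp, Function.comp]
  split_ifs with h1 h2
  · exact (hf.map_min).symm
  · exact (hf.map_max).symm
  · rfl

lemma run_map {α β : Type*} [LinearOrder α] [LinearOrder β] {n : ℕ}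
    (f : α → β) (hf : Monotone f) (C : List (Fin n × Fin n)) (x : Fin n → α) :
    run C (f ∘ x) = f ∘ run C x := by
  induction C generalizing x with
  | nil => rfl
  | cons c C ih =>
    show run C (applyComp c (f ∘ x)) = f ∘ run C (applyComp c x)
    rw [applyComp_map f hf, ih]

/-- zero-one principle: if `C` sorts every binary input, then it sorts every
input over every linearly ordered set. -/
theorem zero_one_principle {n : ℕ} (C : List (Fin n × Fin n)) (hC : Standard C)
    (h : ∀ x : Fin n → Bool, Monotone (run C x)) :
    ∀ (α : Type*) [LinearOrder α] (y : Fin n → α), Monotone (run C y) := by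
  intro α _ y
  intro i j hij
  by_contra hlt
  push_neg at hlt
  set f : α → Bool := fun a => decide (run C y i ≤ a) with hfdef
  have hf : Monotone f := by
    intro a b hab
    simp only [hfdef]
    by_cases hi : run C y i ≤ a
    · simp [hi, hi.trans hab]
    · simp [hi]
  have := h (f ∘ y) hij
  rw [run_map f hf] at this
  simp only [Function.comp, hfdef] at this
  rw [decide_eq_true (le_refl _), decide_eq_false (not_le.mpr hlt)] at this
  exact absurd this (by decide)
end
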